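/- The bivariate sextic polynomial p(x_1, x_2) = 17x_1⁶ − 20x_1⁴ + 7x_1² + 18x_1 + 18x_2⁴ − 19x_2² − 19x_2 + 21 − 20x_1x_2 satisfies p(x) ≥ 0 for all x ∈ ℝ², but p is not a sum of squares of polynomials. -/

import Mathlib

/-!
Nonnegativity: `(1 + x₁² + x₂²) p` is an explicit sum of squares (an `LDLᵀ` factorization of a
positive semidefinite Gram matrix).

Not a sum of squares: give `x₁` weight 2 and `x₂` weight 3, so that `p` has weight at most 12.
In `p = ∑ qⱼ²`, the monomial of the `qⱼ` that is largest for weight, ties broken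
lexicographically, has a square with positive coefficient that nothing cancels; hence every `qⱼ`
has weight at most 6, i.e. lies in the span of `1, x₁, x₁², x₁³, x₂, x₁x₂, x₂²`. On this span the
signed combination `L` of evaluations at 19 integer points is a positive definite quadratic form
in the coefficients, so `L (qⱼ²) ≥ 0`, while `L p < 0`.
-/

open MvPolynomial

/-- A polynomial is a sum of squares. -/
def IsSOS {σ : Type*} (p : MvPolynomial σ ℝ) : Prop :=
  ∃ (m : ℕ) (q : Fin m → MvPolynomial σ ℝ), p = ∑ j, q j ^ 2

/-- The bivariate sextic polynomial
`17x₁⁶ − 20x₁⁴ + 7x₁² + 18x₁ + 18x₂⁴ − 19x₂² − 19x₂ + 21 − 20x₁x₂`. -/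
noncomputable def p6 : MvPolynomial (Fin 2) ℝ :=
  17 * X 0 ^ 6 - 20 * X 0 ^ 4 + 7 * X 0 ^ 2 + 18 * X 0 +
    18 * X 1 ^ 4 - 19 * X 1 ^ 2 - 19 * X 1 + C 21 - 20 * X 0 * X 1

open Finset

section HalfNewtonPolytope

variable {σ R ι : Type*}

theorem AddMonoidHom.eq_of_le_of_add_eq_add_self {A M : Type*} [AddCommMonoid A]
    [AddCommMonoid M] [LinearOrder M] [IsOrderedCancelAddMonoid M] {κ : A →+ M}
    (hκ : Function.Injective κ) {μ ν β : A}
    (hμ : κ μ ≤ κ β) (hν : κ ν ≤ κ β) (h : μ + ν = β + β) : μ = β := by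
  refine hκ (hμ.antisymm (not_lt.1 fun hlt => ?_))
  have := add_lt_add_of_lt_of_le hlt hν
  rw [← map_add, ← map_add, h] at this
  exact this.false

variable {M : Type*} [AddCommMonoid M] [LinearOrder M] [IsOrderedCancelAddMonoid M]

theorem coeff_add_self_sq_of_forall_le [CommSemiring R] {κ : (σ →₀ ℕ) →+ M}
    (hκ : Function.Injective κ) {q : MvPolynomial σ R} {β : σ →₀ ℕ}
    (hβ : ∀ α ∈ q.support, κ α ≤ κ β) : coeff (β + β) (q ^ 2) = coeff β q ^ 2 := by
  classical
  rw [sq, sq, coeff_mul, sum_eq_single (β, β)]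
  · rintro ⟨μ, ν⟩ hμν hne
    by_contra h
    replace hμν : μ + ν = β + β := HasAntidiagonal.mem_antidiagonal.1 hμν
    have hμ := hβ μ (mem_support_iff.2 (left_ne_zero_of_mul h))
    have hν := hβ ν (mem_support_iff.2 (right_ne_zero_of_mul h))
    have hμβ : μ = β := κ.eq_of_le_of_add_eq_add_self hκ hμ hν hμν
    have hνβ : ν = β := κ.eq_of_le_of_add_eq_add_self hκ hν hμ (by rwa [add_comm])
    exact hne (by rw [hμβ, hνβ])
  · simp

theorem exists_add_self_mem_support_sum_sq [CommRing R] [LinearOrder R] [IsStrictOrderedRing R]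
    [Fintype ι] {κ : (σ →₀ ℕ) →+ M} (hκ : Function.Injective κ) (q : ι → MvPolynomial σ R)
    (hq : ∃ j, q j ≠ 0) :
    ∃ β, β + β ∈ (∑ j, q j ^ 2).support ∧ ∀ j, ∀ α ∈ (q j).support, κ α ≤ κ β := by
  classical
  obtain ⟨j₀, hj₀⟩ := hq
  obtain ⟨α₀, hα₀⟩ := support_nonempty.2 hj₀
  obtain ⟨β, hβS, hβmax⟩ := (univ.biUnion fun j => (q j).support).exists_max_image κ
    ⟨α₀, mem_biUnion.2 ⟨j₀, mem_univ _, hα₀⟩⟩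
  have hle : ∀ j, ∀ α ∈ (q j).support, κ α ≤ κ β := fun j α hα =>
    hβmax α (mem_biUnion.2 ⟨j, mem_univ _, hα⟩)
  obtain ⟨j₁, -, hj₁⟩ := mem_biUnion.1 hβS
  refine ⟨β, ?_, hle⟩
  rw [mem_support_iff, coeff_sum,
    sum_congr rfl fun j _ => coeff_add_self_sq_of_forall_le hκ (hle j)]
  exact (sum_pos' (fun j _ => sq_nonneg (coeff β (q j)))
    ⟨j₁, mem_univ _, sq_pos_of_ne_zero (mem_support_iff.1 hj₁)⟩).ne'

theorem weight_le_of_mem_support_of_sum_sq [CommRing R] [LinearOrder R] [IsStrictOrderedRing R]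
    [Fintype ι] (w : σ → ℕ) {d : ℕ} (q : ι → MvPolynomial σ R)
    (hd : ∀ γ ∈ (∑ j, q j ^ 2).support, Finsupp.weight w γ ≤ 2 * d) (j : ι) {α : σ →₀ ℕ}
    (hα : α ∈ (q j).support) : Finsupp.weight w α ≤ d := by
  classical
  let : LinearOrder σ := linearOrderOfSTO WellOrderingRel
  let κ : (σ →₀ ℕ) →+ ℕ ×ₗ Lex (σ →₀ ℕ) :=
    { toFun := fun α => toLex (Finsupp.weight w α, toLex α)
      map_zero' := rfl
      map_add' := fun _ _ => by simp; rfl }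
  have hκ : Function.Injective κ := fun _ _ h =>
    congrArg (fun x : ℕ ×ₗ Lex (σ →₀ ℕ) => ofLex (ofLex x).2) h
  obtain ⟨β, hβ, hle⟩ := exists_add_self_mem_support_sum_sq hκ q ⟨j, by rintro h; simp [h] at hα⟩
  have h2β := hd _ hβ
  have hαβ : Finsupp.weight w α ≤ Finsupp.weight w β := Prod.Lex.monotone_fst_ofLex (hle j α hα)
  rw [map_add] at h2β
  omega

end HalfNewtonPolytope

theorem eval_p6 (x : Fin 2 → ℝ) :
    eval x p6 = 17 * x 0 ^ 6 - 20 * x 0 ^ 4 + 7 * x 0 ^ 2 + 18 * x 0 + 18 * x 1 ^ 4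
      - 19 * x 1 ^ 2 - 19 * x 1 + 21 - 20 * x 0 * x 1 := by
  simp [p6]

theorem one_add_sq_add_sq_mul_sextic_eq (a b : ℝ) :
    (1 + a ^ 2 + b ^ 2) * (17 * a ^ 6 - 20 * a ^ 4 + 7 * a ^ 2 + 18 * a + 18 * b ^ 4 - 19 * b ^ 2
      - 19 * b + 21 - 20 * a * b) =
      21 * (1 + (-19 / 42) * b + (-6131 / 21000) * b ^ 2 + (-9923 / 21000) * b ^ 3
          + (3 / 7) * a + (-451 / 1500) * a * b + (593 / 3150) * a * b ^ 2
          + (4301 / 15750) * a ^ 2 + (-2921 / 31500) * a ^ 2 * b + (4939 / 21000) * a ^ 3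
          + (-797 / 3500) * a ^ 3 * b + (-34009 / 105000) * a ^ 4) ^ 2
      + (52313 / 5250) * (b + (-98723 / 418504) * b ^ 2 + (-386651 / 418504) * b ^ 3
          + (4047 / 104626) * a + (19005 / 104626) * a * b + (-56737 / 627756) * a * b ^ 2
          + (7858 / 156939) * a ^ 2 + (-183713 / 627756) * a ^ 2 * b
          + (14293 / 418504) * a ^ 3 + (22845 / 104626) * a ^ 3 * b
          + (905413 / 4185040) * a ^ 4) ^ 2
      + (637126045909 / 104626000000) * (b ^ 2 + (-530316467603 / 637126045909) * b ^ 3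
          + (972653129500 / 1911378137727) * a + (-362660098912 / 1911378137727) * a * b
          + (-193062063930 / 637126045909) * a * b ^ 2
          + (-650795497592 / 13379646964089) * a ^ 2
          + (651514476022 / 4459882321363) * a ^ 2 * b + (-126678009071 / 637126045909) * a ^ 3
          + (128938099544 / 1911378137727) * a ^ 3 * b
          + (-25498303391411 / 44598823213630) * a ^ 4) ^ 2
      + (186962410945001 / 318563022954500) * (b ^ 3 + (-733707309203377 / 1121774465670006) * a
          + (163742253567100 / 186962410945001) * a * b
          + (-955522169173097 / 1121774465670006) * a * b ^ 2
          + (10946812438561793 / 7852421259690042) * a ^ 2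
          + (-382496928540340 / 3926210629845021) * a ^ 2 * b
          + (135854519896823 / 1121774465670006) * a ^ 3
          + (176674067826829 / 1121774465670006) * a ^ 3 * b
          + (-93936015227005043 / 26174737532300140) * a ^ 4) ^ 2
      + (36448573232793286327 / 3365323397010018000) * (a
          + (-912095682063730646 / 5206939033256183761) * a * b
          + (-173488864567722119069 / 255140012629553004289) * a * b ^ 2
          + (53471395499339706727 / 255140012629553004289) * a ^ 2
          + (-43904049193662997274 / 255140012629553004289) * a ^ 2 * b
          + (-52550506967442207947 / 182242866163966431635) * a ^ 3
          + (-10597834184872951271 / 72897146465586572654) * a ^ 3 * b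
          + (67320563263522410483 / 255140012629553004289) * a ^ 4) ^ 2
      + (3708096345909140180774027 / 656074318190279153886000) * (a * b
          + (72096248220753030391121 / 3708096345909140180774027) * a * b ^ 2
          + (167592830282698959676442 / 3708096345909140180774027) * a ^ 2
          + (-460829751077021029245162 / 3708096345909140180774027) * a ^ 2 * b
          + (524104672534171045416407 / 37080963459091401807740270) * a ^ 3
          + (-5888996241019996006602258 / 3708096345909140180774027) * a ^ 3 * b
          + (2558720408818640937345639 / 74161926918182803615480540) * a ^ 4) ^ 2
      + (10581150672166037886056741897147 / 1907815569970252623008236891500) * (a * b ^ 2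
          + (168460023195824241252191746203 / 21162301344332075772113483794294) * a ^ 2
          + (-680633963654130649438467498989 / 5771536730272384301485495580262) * a ^ 2 * b
          + (-1219509626755487208238335704227517 / 1269738080659924546326809027657640) * a ^ 3
          + (-24573547764939350962205108315929 / 84649205377328303088453935177176) * a ^ 3 * b
          + (-479223426680415250301080809349 / 3255738668358780888017459045276) * a ^ 4) ^ 2
      + (3533960262948249631996527744683543881 / 5184763829361358564167803529602030000) * (a ^ 2
          + (-10167174116765576781237353606830421365 / 63611284733068493375937499404303789858) * a ^ 2 * b
          + (-86315828130667739130809012542389739385 / 127222569466136986751874998808607579716) * a ^ 3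
          + (23863215024557186312969962197639776825 / 42407523155378995583958332936202526572) * a ^ 3 * b
          + (-24091037306841346212601539539531130778 / 10601880788844748895989583234050631643) * a ^ 4) ^ 2
      + (6472236031980565399414309353937524337054829 / 112210306269132822315153748949191885309512000) * (
          a ^ 2 * b
          + (19972474076300875065293156545533224137084307 / 64722360319805653994143093539375243370548290) * a ^ 3
          + (2074593315451838443528552716122127831676119 / 12944472063961130798828618707875048674109658) * a ^ 3 * b
          + (-2966361845732352828518394431801285937961968 / 32361180159902826997071546769687621685274145) * a ^ 4) ^ 2
      + (2616034970104397954447312326549284163856880884797 / 15533366476753356958594342449450058408931589600000) * (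
          a ^ 3
          + (-222184836562471082774375156300706972655031346305 / 2616034970104397954447312326549284163856880884797) * a ^ 3 * b
          + (1195500964518308447475731399046430405759287570972 / 2616034970104397954447312326549284163856880884797) * a ^ 4) ^ 2
      + (12280224751172723749226022787385835069689539936153223 / 54936734372192357043393558857534967440994498580737000) * (
          a ^ 3 * b
          + (-377503110270494210670963110556254623616602853032562217 / 982417980093817899938081822990866805575163194892257840) * a ^ 4) ^ 2
      + (24527772809181514516455291462976258343349576252903050744623 / 78593438407505431995046545839269344446013055591380627200000) * (
          a ^ 4) ^ 2 := by
  ring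

theorem sextic_nonneg (a b : ℝ) :
    0 ≤ 17 * a ^ 6 - 20 * a ^ 4 + 7 * a ^ 2 + 18 * a + 18 * b ^ 4 - 19 * b ^ 2 - 19 * b + 21
      - 20 * a * b := by
  refine nonneg_of_mul_nonneg_right ?_ (by positivity : (0 : ℝ) < 1 + a ^ 2 + b ^ 2)
  rw [one_add_sq_add_sq_mul_sextic_eq]
  positivity

noncomputable def biexp (i j : ℕ) : Fin 2 →₀ ℕ := Finsupp.single 0 i + Finsupp.single 1 j

@[simp] theorem biexp_apply_zero (i j : ℕ) : biexp i j 0 = i := by simp [biexp]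
@[simp] theorem biexp_apply_one (i j : ℕ) : biexp i j 1 = j := by simp [biexp]

theorem biexp_inj {i j k l : ℕ} : biexp i j = biexp k l ↔ i = k ∧ j = l := by
  simp [Finsupp.ext_iff, Fin.forall_fin_two]

theorem eq_biexp (α : Fin 2 →₀ ℕ) : α = biexp (α 0) (α 1) := by
  ext i; fin_cases i <;> simp

theorem weight_apply_fin_two (w : Fin 2 → ℕ) (α : Fin 2 →₀ ℕ) :
    Finsupp.weight w α = α 0 * w 0 + α 1 * w 1 := by
  simp [Finsupp.weight_apply, Finsupp.sum_fintype]

theorem mem_of_weight_le_six {α : Fin 2 →₀ ℕ} (hα : Finsupp.weight ![2, 3] α ≤ 6) :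
    α ∈ ({biexp 0 0, biexp 1 0, biexp 2 0, biexp 3 0, biexp 0 1, biexp 1 1, biexp 0 2} :
      Finset (Fin 2 →₀ ℕ)) := by
  rw [weight_apply_fin_two] at hα
  simp only [Matrix.cons_val_zero, Matrix.cons_val_one] at hα
  rw [eq_biexp α]
  have h0 : α 0 ≤ 3 := by omega
  have h1 : α 1 ≤ 2 := by omega
  interval_cases α 0 <;> interval_cases α 1 <;> simp_all [biexp_inj]

theorem eval_eq_of_weight_le_six {q : MvPolynomial (Fin 2) ℝ}
    (hq : ∀ α ∈ q.support, Finsupp.weight ![2, 3] α ≤ 6) (x : Fin 2 → ℝ) :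
    eval x q = coeff (biexp 0 0) q + coeff (biexp 1 0) q * x 0 + coeff (biexp 2 0) q * x 0 ^ 2
      + coeff (biexp 3 0) q * x 0 ^ 3 + coeff (biexp 0 1) q * x 1
      + coeff (biexp 1 1) q * (x 0 * x 1) + coeff (biexp 0 2) q * x 1 ^ 2 := by
  rw [eval_eq', sum_subset (fun α hα => mem_of_weight_le_six (hq α hα))
    (fun α _ hα => by rw [notMem_support_iff.1 hα, zero_mul])]
  simp [biexp_inj, Fin.prod_univ_two]
  ring

theorem weight_le_twelve_of_mem_support_p6 {γ : Fin 2 →₀ ℕ} (hγ : γ ∈ p6.support) :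
    Finsupp.weight ![2, 3] γ ≤ 12 := by
  contrapose! hγ
  rw [weight_apply_fin_two] at hγ
  simp only [Matrix.cons_val_zero, Matrix.cons_val_one] at hγ
  have hp6 : p6 = C 17 * X 0 ^ 6 - C 20 * X 0 ^ 4 + C 7 * X 0 ^ 2 + C 18 * X 0 + C 18 * X 1 ^ 4
      - C 19 * X 1 ^ 2 - C 19 * X 1 + C 21 - C 20 * (X 0 * X 1) := by
    simp only [p6, map_ofNat]
    ring
  rw [notMem_support_iff, hp6]
  simp only [X, monomial_pow, C_mul_monomial, monomial_mul, coeff_add, coeff_sub, coeff_monomial,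
    coeff_C, Finsupp.ext_iff, Fin.forall_fin_two]
  simp only [Finsupp.smul_apply, Finsupp.add_apply, Finsupp.single_apply, Finsupp.coe_zero,
    Pi.zero_apply]
  norm_num
  simp (disch := omega) only [if_neg]
  norm_num

def dualPoints : Fin 19 → Fin 2 → ℝ :=
  ![![-3, -3], ![-3, -2], ![-3, -1], ![-3, 0], ![-3, 1], ![-2, -3], ![-2, -2], ![-2, -1], ![-2, 0],
    ![-1, -3], ![-1, -2], ![-1, -1], ![0, -3], ![0, -2], ![0, -1], ![1, -3], ![1, -2], ![2, -3],
    ![3, -3]]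

noncomputable def dualWeights : Fin 19 → ℝ :=
  ![6263410531 / 144000000, -225756041 / 1600000, 39200903 / 250000, -48148747 / 750000,
    20022889 / 4000000, -885741109 / 20000000, 465627139 / 3000000, -711903133 / 4000000,
    200813111 / 3000000, -1423257529 / 48000000, 45345799 / 800000, -12297831 / 500000,
    237879671 / 7200000, -36923637 / 500000, 177192941 / 4000000, -26020129 / 9600000,
    90578149 / 24000000, -121633 / 6000000, -211681 / 720000000]

noncomputable def dualFunctional : MvPolynomial (Fin 2) ℝ →ₗ[ℝ] ℝ :=
  ∑ i, dualWeights i • (aeval (dualPoints i)).toLinearMap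

theorem dualFunctional_apply (f : MvPolynomial (Fin 2) ℝ) :
    dualFunctional f = ∑ i, dualWeights i * eval (dualPoints i) f := by
  simp [dualFunctional]

theorem dualWeights_gram_nonneg (c00 c10 c20 c30 c01 c11 c02 : ℝ) :
    0 ≤ ∑ i, dualWeights i * (c00 + c10 * dualPoints i 0 + c20 * dualPoints i 0 ^ 2
      + c30 * dualPoints i 0 ^ 3 + c01 * dualPoints i 1 + c11 * (dualPoints i 0 * dualPoints i 1)
      + c02 * dualPoints i 1 ^ 2) ^ 2 := by
  convert_to 0 ≤
      (6861583 / 1000000) * (c00 + (-1209135 / 6861583) * c10 + (3035430 / 6861583) * c20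
          + (-866550 / 6861583) * c30 + (5437652 / 6861583) * c01 + (-43410 / 6861583) * c11
          + (5207959 / 6861583) * c02) ^ 2
      + (3873169487493 / 1372316600000) * (c10 + (-151710673040 / 1291056495831) * c20
          + (13043898242348 / 19365847437465) * c30 + (418466268866 / 1291056495831) * c01
          + (4281244396552 / 6455282479155) * c11 + (5309935836089 / 19365847437465) * c02) ^ 2
      + (144580914298008731 / 215176082638500000) * (c20
          + (-65910064710874271 / 867485485788052386) * c30
          + (-90057929905211963 / 144580914298008731) * c01
          + (104173524689245145 / 289161828596017462) * c11
          + (74338885278540463 / 867485485788052386) * c02) ^ 2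
      + (79401232427606620818187 / 13012282286820785790000000) * (c30
          + (542098482938700990663840 / 79401232427606620818187) * c01
          + (-897421576320907599236481 / 79401232427606620818187) * c11
          + (9730229890913363641 / 79401232427606620818187) * c02) ^ 2
      + (4533771669091267867429767039 / 79401232427606620818187000000) * (c01
          + (-7506542626723735697725948297 / 4533771669091267867429767039) * c11
          + (-423535241492902125582299 / 4533771669091267867429767039) * c02) ^ 2
      + (3180248713929368410816481223109 / 566721458636408483428720879875000) * (c11
          + (-2061826571267216237460620503 / 12720994855717473643265924892436) * c02) ^ 2
      + (6119171559776138386479432155794089 / 6360497427858736821632962446218000000) * c02 ^ 2 using 2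
  · simp [Fin.sum_univ_succ, dualWeights, dualPoints]
    ring
  positivity

theorem dualFunctional_sq_nonneg {q : MvPolynomial (Fin 2) ℝ}
    (hq : ∀ α ∈ q.support, Finsupp.weight ![2, 3] α ≤ 6) : 0 ≤ dualFunctional (q ^ 2) := by
  simp only [dualFunctional_apply, map_pow, eval_eq_of_weight_le_six hq]
  exact dualWeights_gram_nonneg ..

theorem dualFunctional_p6 : dualFunctional p6 = -10763 / 500000 := by
  simp [dualFunctional_apply, Fin.sum_univ_succ, eval_p6, dualPoints, dualWeights]
  norm_num

theorem bivariate_sextic_nonneg_not_sos :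
    (∀ x : Fin 2 → ℝ, 0 ≤ eval x p6) ∧ ¬ IsSOS p6 := by
  refine ⟨fun x => eval_p6 x ▸ sextic_nonneg (x 0) (x 1), ?_⟩
  rintro ⟨m, q, hpq⟩
  have hq : ∀ j, ∀ α ∈ (q j).support, Finsupp.weight ![2, 3] α ≤ 6 := fun j _ hα =>
    weight_le_of_mem_support_of_sum_sq ![2, 3] q
      (fun γ hγ => weight_le_twelve_of_mem_support_p6 (hpq ▸ hγ)) j hα
  have hneg : dualFunctional (∑ j, q j ^ 2) < 0 := by
    rw [← hpq, dualFunctional_p6]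
    norm_num
  rw [map_sum] at hneg
  exact hneg.not_ge (sum_nonneg fun j _ => dualFunctional_sq_nonneg (hq j))
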